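/- Let G be a finite p-group with abelian derived subgroup, F a field of characteristic p, and g ∈ G a non-central element with conjugacy class {ga₁, ..., ga_s} where a₁, ..., a_s ∈ [G,G]. Then p divides s, the element a₁ + ⋯ + a_s of FG commutes with g, and if p^r ≥ exponent of [G,G] then the p^r-th power of the class sum g(a₁ + ⋯ + a_s) is zero in FG. -/

import Mathlib

/-! Conjugation by `g` permutes the `aᵢ` (as `g⁻¹ (g aᵢ) g = aᵢ g` lies in the class of `g`), so
`∑ aᵢ` commutes with `g`. The `aᵢ` commute pairwise and `aᵢ ^ p ^ r = 1`, so Frobenius turns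
`(∑ aᵢ) ^ p ^ r` into `s • 1`, which vanishes because `s`, the size of the conjugacy class of a
non-central element of a `p`-group, is a nontrivial power of `p`. -/

theorem Finset.sum_pow_expChar_pow_of_commute {R ι : Type*} [Semiring R] (p n : ℕ) [ExpChar R p]
    (s : Finset ι) (f : ι → R) (h : (s : Set ι).Pairwise fun i j => Commute (f i) (f j)) :
    (∑ i ∈ s, f i) ^ p ^ n = ∑ i ∈ s, f i ^ p ^ n := by
  induction s using Finset.cons_induction with
  | empty => simp [zero_pow (expChar_pow_pos R p n).ne']
  | cons a s has ih =>
    rw [Finset.coe_cons, Set.pairwise_insert] at h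
    rw [Finset.sum_cons, Finset.sum_cons, add_pow_expChar_pow_of_commute _ _
      (Commute.sum_right _ _ _ fun j hj => (h.2 j hj (ne_of_mem_of_not_mem hj has).symm).1),
      ih h.1]

theorem IsPGroup.dvd_card_conjugatesOf {p : ℕ} [Fact p.Prime] {G : Type*} [Group G] [Finite G]
    (hG : IsPGroup p G) {g : G} (hg : g ∉ Subgroup.center G) : p ∣ Nat.card (conjugatesOf g) := by
  have horbit : MulAction.orbit (ConjAct G) g = conjugatesOf g := by
    ext h; exact ConjAct.mem_orbit_conjAct.trans isConj_comm
  obtain ⟨_ | n, hn⟩ := (hG.of_equiv ConjAct.toConjAct).card_orbit g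
  · refine absurd ?_ hg
    rw [← SetLike.mem_coe, ← ConjAct.fixedPoints_eq_center,
      ← MulAction.subsingleton_orbit_iff_mem_fixedPoints,
      ← Set.subsingleton_coe, ← Finite.card_le_one_iff_subsingleton, hn, pow_zero]
  · rw [← horbit, hn]
    exact dvd_pow_self p n.succ_ne_zero

theorem IsPGroup.pow_eq_one_of_exponent_le {p : ℕ} [Fact p.Prime] {G : Type*} [Group G]
    [Finite G] (hG : IsPGroup p G) {r : ℕ} (hr : Monoid.exponent G ≤ p ^ r) (x : G) :
    x ^ p ^ r = 1 := by
  obtain ⟨k, hk⟩ := isPGroup_iff_exponent_eq_pow.mp hG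
  rw [hk] at hr
  refine Monoid.exponent_dvd_iff_forall_pow_eq_one.mp ?_ x
  rw [hk]
  exact Nat.pow_dvd_pow p ((Nat.pow_le_pow_iff_right (Fact.out : p.Prime).one_lt).mp hr)

theorem commute_sum_of_perm {R ι : Type*} [Semiring R] [Fintype ι] {x : R} {f : ι → R}
    (σ : Equiv.Perm ι) (h : ∀ i, x * f (σ i) = f i * x) : Commute x (∑ i, f i) :=
  calc x * ∑ i, f i = ∑ i, x * f (σ i) := by rw [Finset.mul_sum, Equiv.sum_comp σ (x * f ·)]
    _ = (∑ i, f i) * x := by rw [Finset.sum_mul]; exact Finset.sum_congr rfl fun i _ => h i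

theorem exists_perm_mul_eq_mul_of_conjugatesOf_eq {G ι : Type*} [Group G] [Finite ι] {g : G}
    {a : ι → G} (hinj : Function.Injective a)
    (hclass : conjugatesOf g = Set.range fun i => g * a i) :
    ∃ σ : Equiv.Perm ι, ∀ i, g * a (σ i) = a i * g := by
  have hconj : ∀ i, ∃ j, g * a j = a i * g := fun i => by
    have : a i * g ∈ conjugatesOf g := by
      have hi : g * a i ∈ conjugatesOf g := by rw [hclass]; exact Set.mem_range_self i
      exact IsConj.trans hi (isConj_iff.mpr ⟨g⁻¹, by group⟩)
    simpa [hclass] using this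
  choose σ hσ using hconj
  have hσ_inj : Function.Injective σ := fun i j hij =>
    hinj (mul_right_cancel (by rw [← hσ i, ← hσ j, hij]))
  exact ⟨Equiv.ofBijective σ (Finite.injective_iff_bijective.mp hσ_inj), hσ⟩

theorem sum_pow_char_pow_eq_zero {R ι : Type*} [Semiring R] [Fintype ι] (p n : ℕ) [Fact p.Prime]
    [CharP R p] {x : ι → R} (hcomm : Pairwise fun i j => Commute (x i) (x j))
    (hx : ∀ i, x i ^ p ^ n = 1) (hp : p ∣ Fintype.card ι) : (∑ i, x i) ^ p ^ n = 0 := by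
  have hcomm' : ((Finset.univ : Finset ι) : Set ι).Pairwise fun i j => Commute (x i) (x j) := by
    rwa [Finset.coe_univ, Set.pairwise_univ]
  rw [Finset.sum_pow_expChar_pow_of_commute p n _ _ hcomm']
  simpa [hx] using (CharP.cast_eq_zero_iff R p _).mpr hp

theorem stmt10 (p : ℕ) (hp : p.Prime) {G : Type*} [Group G] [Finite G]
    (hpG : IsPGroup p G)
    (hab : ∀ u v : commutator G, u * v = v * u)
    (F : Type*) [Field F] [CharP F p]
    (g : G) (hg : g ∉ Subgroup.center G)
    (s : ℕ) (a : Fin s → G) (ha : ∀ i, a i ∈ commutator G)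
    (hinj : Function.Injective a)
    (hclass : {h : G | IsConj g h} = Set.range fun i => g * a i)
    (r : ℕ) (hr : Monoid.exponent (commutator G) ≤ p ^ r) :
    p ∣ s ∧
    (∑ i, MonoidAlgebra.of F G (a i)) * MonoidAlgebra.of F G g =
      MonoidAlgebra.of F G g * ∑ i, MonoidAlgebra.of F G (a i) ∧
    (MonoidAlgebra.of F G g * ∑ i, MonoidAlgebra.of F G (a i)) ^ p ^ r = 0 := by
  have := Fact.mk hp
  have : CharP (MonoidAlgebra F G) p := charP_of_injective_algebraMap' F p
  replace hclass : conjugatesOf g = _ := hclass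
  have hdvd : p ∣ s := by
    have := hpG.dvd_card_conjugatesOf hg
    rwa [hclass, Nat.card_range_of_injective (f := fun i => g * a i)
      ((mul_right_injective g).comp hinj), Nat.card_fin] at this
  obtain ⟨σ, hσ⟩ := exists_perm_mul_eq_mul_of_conjugatesOf_eq hinj hclass
  have hcomm : Commute (MonoidAlgebra.of F G g) (∑ i, MonoidAlgebra.of F G (a i)) :=
    commute_sum_of_perm σ fun i => by rw [← map_mul, ← map_mul, hσ i]
  have hpow : (∑ i, MonoidAlgebra.of F G (a i)) ^ p ^ r = 0 := by
    refine sum_pow_char_pow_eq_zero p r (fun i j _ => ?_) (fun i => ?_) (by simpa using hdvd)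
    · exact Commute.map (congrArg Subtype.val (hab ⟨a i, ha i⟩ ⟨a j, ha j⟩)) _
    · rw [← map_pow, ← Subgroup.coe_mk _ _ (ha i), ← Subgroup.coe_pow,
        (hpG.to_subgroup _).pow_eq_one_of_exponent_le hr, Subgroup.coe_one, map_one]
  exact ⟨hdvd, hcomm.eq.symm, by rw [hcomm.mul_pow, hpow, mul_zero]⟩
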